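/- There exists a constant c > 0 such that for all n and all 0 ≤ l ≤ n-1, T(n, n-l) ≤ c * (l+1) * ((n+2l)/5)^l. -/

import Mathlib

open Finset

/-- The number of components of a permutation `π` of `{1,…,n}` (0-indexed as `Fin n`):
the number of indices `1 ≤ s ≤ n` such that `π` maps `{1,…,s}` to itself. -/
def numComponents {n : ℕ} (π : Equiv.Perm (Fin n)) : ℕ :=
  ((Finset.Icc 1 n).filter fun s => ∀ i : Fin n, (i : ℕ) < s → (π i : ℕ) < s).card

/-- `T n k` is the number of permutations of `{1,…,n}` with exactly `k` components. -/
def T (n k : ℕ) : ℕ :=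
  (Finset.univ.filter fun π : Equiv.Perm (Fin n) => numComponents π = k).card

def Bset {n : ℕ} (π : Equiv.Perm (Fin n)) : Finset ℕ :=
  (Finset.Icc 1 n).filter fun s => ∀ i : Fin n, (i : ℕ) < s → (π i : ℕ) < s

lemma numComponents_eq {n : ℕ} (π : Equiv.Perm (Fin n)) :
    numComponents π = (Bset π).card := rfl

lemma mem_Bset {n : ℕ} (π : Equiv.Perm (Fin n)) (s : ℕ) :
    s ∈ Bset π ↔ (1 ≤ s ∧ s ≤ n) ∧ ∀ i : Fin n, (i : ℕ) < s → (π i : ℕ) < s := by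
  simp [Bset, Finset.mem_filter, Finset.mem_Icc]

lemma n_mem_Bset {n : ℕ} (hn : 1 ≤ n) (π : Equiv.Perm (Fin n)) : n ∈ Bset π := by
  rw [mem_Bset]
  exact ⟨⟨hn, le_rfl⟩, fun i _ => (π i).2⟩

lemma Bset_nonempty {n : ℕ} (hn : 1 ≤ n) (π : Equiv.Perm (Fin n)) : (Bset π).Nonempty :=
  ⟨n, n_mem_Bset hn π⟩

/-- the prefix property transfers to the inverse permutation -/
lemma pre_symm {n : ℕ} (π : Equiv.Perm (Fin n)) (a : ℕ)
    (hpre : ∀ i : Fin n, (i : ℕ) < a → (π i : ℕ) < a) :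
    ∀ i : Fin n, (i : ℕ) < a → (π.symm i : ℕ) < a := by
  intro i hi
  classical
  set s : Finset (Fin n) := Finset.univ.filter (fun j : Fin n => (j : ℕ) < a) with hs
  have himg : s.image π = s := by
    apply Finset.eq_of_subset_of_card_le
    · intro x hx
      simp only [hs, Finset.mem_image, Finset.mem_filter, Finset.mem_univ, true_and] at hx ⊢
      obtain ⟨j, hj, rfl⟩ := hx
      exact hpre j hj
    · rw [Finset.card_image_of_injective _ π.injective]
  have hmem : i ∈ s := by
    simp only [hs, Finset.mem_filter, Finset.mem_univ, true_and]
    exact hi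
  rw [← himg] at hmem
  simp only [Finset.mem_image] at hmem
  obtain ⟨j, hj, hji⟩ := hmem
  have hj' : π.symm i = j := by rw [← hji]; simp
  rw [hj']
  simp only [hs, Finset.mem_filter, Finset.mem_univ, true_and] at hj
  exact hj

lemma low_of_pre {n : ℕ} (π : Equiv.Perm (Fin n)) (a : ℕ)
    (hpre : ∀ i : Fin n, (i : ℕ) < a → (π i : ℕ) < a) :
    ∀ i : Fin n, a ≤ (i : ℕ) → a ≤ (π i : ℕ) := by
  intro i hi
  by_contra h
  push_neg at h
  have := pre_symm π a hpre (π i) h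
  simp only [Equiv.symm_apply_apply] at this
  omega

lemma low_symm {n : ℕ} (π : Equiv.Perm (Fin n)) (a : ℕ)
    (hpre : ∀ i : Fin n, (i : ℕ) < a → (π i : ℕ) < a) :
    ∀ i : Fin n, a ≤ (i : ℕ) → a ≤ (π.symm i : ℕ) := by
  intro i hi
  by_contra h
  push_neg at h
  have := hpre (π.symm i) h
  simp only [Equiv.apply_symm_apply] at this
  omega

def headPerm {n : ℕ} (a : ℕ) (han : a ≤ n) (π : Equiv.Perm (Fin n))
    (hpre : ∀ i : Fin n, (i : ℕ) < a → (π i : ℕ) < a) : Equiv.Perm (Fin a) where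
  toFun x := ⟨(π ⟨(x : ℕ), lt_of_lt_of_le x.2 han⟩ : Fin n), hpre _ x.2⟩
  invFun x := ⟨(π.symm ⟨(x : ℕ), lt_of_lt_of_le x.2 han⟩ : Fin n), pre_symm π a hpre _ x.2⟩
  left_inv x := by
    ext
    show ((π.symm ⟨((π ⟨(x : ℕ), _⟩ : Fin n) : ℕ), _⟩ : Fin n) : ℕ) = (x : ℕ)
    rw [Fin.eta, Equiv.symm_apply_apply]
  right_inv x := by
    ext
    show ((π ⟨((π.symm ⟨(x : ℕ), _⟩ : Fin n) : ℕ), _⟩ : Fin n) : ℕ) = (x : ℕ)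
    rw [Fin.eta, Equiv.apply_symm_apply]

def tailPerm {n : ℕ} (a : ℕ) (han : a ≤ n) (π : Equiv.Perm (Fin n))
    (hpre : ∀ i : Fin n, (i : ℕ) < a → (π i : ℕ) < a) : Equiv.Perm (Fin (n - a)) where
  toFun y := ⟨((π ⟨a + (y : ℕ), by omega⟩ : Fin n) : ℕ) - a, by
    have h1 := low_of_pre π a hpre ⟨a + (y : ℕ), by omega⟩ (Nat.le_add_right a _)
    have h2 := (π ⟨a + (y : ℕ), by omega⟩).2
    omega⟩
  invFun y := ⟨((π.symm ⟨a + (y : ℕ), by omega⟩ : Fin n) : ℕ) - a, by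
    have h1 := low_symm π a hpre ⟨a + (y : ℕ), by omega⟩ (Nat.le_add_right a _)
    have h2 := (π.symm ⟨a + (y : ℕ), by omega⟩).2
    omega⟩
  left_inv y := by
    ext
    have hy : a + (y : ℕ) < n := by omega
    have h1 := low_of_pre π a hpre ⟨a + (y : ℕ), hy⟩ (Nat.le_add_right a _)
    show ((π.symm ⟨a + (((π ⟨a + (y : ℕ), _⟩ : Fin n) : ℕ) - a), _⟩ : Fin n) : ℕ) - a = (y : ℕ)
    have he : (⟨a + (((π ⟨a + (y : ℕ), hy⟩ : Fin n) : ℕ) - a), by omega⟩ : Fin n)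
        = π ⟨a + (y : ℕ), hy⟩ := by
      apply Fin.ext
      show a + (((π ⟨a + (y : ℕ), hy⟩ : Fin n) : ℕ) - a) = _
      omega
    rw [he, Equiv.symm_apply_apply]
    show a + (y : ℕ) - a = (y : ℕ)
    omega
  right_inv y := by
    ext
    have hy : a + (y : ℕ) < n := by omega
    have h1 := low_symm π a hpre ⟨a + (y : ℕ), hy⟩ (Nat.le_add_right a _)
    show ((π ⟨a + (((π.symm ⟨a + (y : ℕ), _⟩ : Fin n) : ℕ) - a), _⟩ : Fin n) : ℕ) - a = (y : ℕ)
    have he : (⟨a + (((π.symm ⟨a + (y : ℕ), hy⟩ : Fin n) : ℕ) - a), by omega⟩ : Fin n)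
        = π.symm ⟨a + (y : ℕ), hy⟩ := by
      apply Fin.ext
      show a + (((π.symm ⟨a + (y : ℕ), hy⟩ : Fin n) : ℕ) - a) = _
      omega
    rw [he, Equiv.apply_symm_apply]
    show a + (y : ℕ) - a = (y : ℕ)
    omega

lemma mem_Bset_tail {n a : ℕ} (ha1 : 1 ≤ a) (han : a ≤ n) (π : Equiv.Perm (Fin n))
    (hpre : ∀ i : Fin n, (i : ℕ) < a → (π i : ℕ) < a) (s : ℕ) :
    s ∈ Bset (tailPerm a han π hpre) ↔ (1 ≤ s ∧ s ≤ n - a) ∧ s + a ∈ Bset π := by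
  rw [mem_Bset, mem_Bset]
  constructor
  · rintro ⟨⟨hs1, hs2⟩, hcond⟩
    refine ⟨⟨hs1, hs2⟩, ⟨by omega, ?_⟩⟩
    intro i hi
    by_cases hia : (i : ℕ) < a
    · have := hpre i hia
      omega
    · push_neg at hia
      have hin : (i : ℕ) - a < n - a := by have := i.2; omega
      have hys : ((⟨(i : ℕ) - a, hin⟩ : Fin (n - a)) : ℕ) < s := by
        show (i : ℕ) - a < s
        omega
      have h2 := hcond ⟨(i : ℕ) - a, hin⟩ hys
      have hpf : a + ((i : ℕ) - a) < n := by have := i.2; omega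
      have h2' : ((π ⟨a + ((i : ℕ) - a), hpf⟩ : Fin n) : ℕ) - a < s := h2
      have heq : (⟨a + ((i : ℕ) - a), hpf⟩ : Fin n) = i :=
        Fin.ext (show a + ((i : ℕ) - a) = (i : ℕ) by omega)
      rw [heq] at h2'
      have hl := low_of_pre π a hpre i hia
      omega
  · rintro ⟨⟨hs1, hs2⟩, _, hcond⟩
    refine ⟨⟨hs1, hs2⟩, ?_⟩
    intro y hy
    have hpf : a + (y : ℕ) < n := by have := y.2; omega
    have h2 := hcond ⟨a + (y : ℕ), hpf⟩ (by show a + (y : ℕ) < s + a; omega)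
    show ((π ⟨a + (y : ℕ), hpf⟩ : Fin n) : ℕ) - a < s
    omega

lemma tail_card {n a k : ℕ} (ha1 : 1 ≤ a) (han : a ≤ n) (π : Equiv.Perm (Fin n))
    (hpre : ∀ i : Fin n, (i : ℕ) < a → (π i : ℕ) < a)
    (hmema : a ∈ Bset π) (hmin : ∀ b ∈ Bset π, a ≤ b) (hps : (Bset π).card = k) :
    numComponents (tailPerm a han π hpre) = k - 1 := by
  rw [numComponents_eq]
  have himage : Bset (tailPerm a han π hpre) = ((Bset π).erase a).image (fun b => b - a) := by
    ext s
    rw [mem_Bset_tail ha1 han π hpre s]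
    simp only [Finset.mem_image, Finset.mem_erase]
    constructor
    · rintro ⟨⟨hs1, hs2⟩, hmem⟩
      exact ⟨s + a, ⟨by omega, hmem⟩, by omega⟩
    · rintro ⟨b, ⟨hba, hbmem⟩, rfl⟩
      have hb_ge : a ≤ b := hmin b hbmem
      have hb_bounds := ((mem_Bset π b).1 hbmem).1
      refine ⟨⟨by omega, by omega⟩, ?_⟩
      rw [show b - a + a = b from by omega]
      exact hbmem
  rw [himage, Finset.card_image_of_injOn, Finset.card_erase_of_mem hmema, hps]
  intro x hx y hy hxy
  have hx' := Finset.mem_erase.1 (Finset.mem_coe.1 hx)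
  have hy' := Finset.mem_erase.1 (Finset.mem_coe.1 hy)
  have hxa := hmin x hx'.2
  have hya := hmin y hy'.2
  have hxy' : x - a = y - a := hxy
  omega

lemma T_rec {n k : ℕ} (hn : 1 ≤ n) (hk : 1 ≤ k) :
    T n k ≤ ∑ a ∈ Finset.Icc 1 n, a.factorial * T (n - a) (k - 1) := by
  classical
  set A := Finset.univ.filter (fun π : Equiv.Perm (Fin n) => numComponents π = k) with hA
  have hTA : T n k = A.card := rfl
  have hfib : A.card = ∑ a ∈ Finset.Icc 1 n,
      (A.filter fun π => (Bset π).min' (Bset_nonempty hn π) = a).card := by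
    apply Finset.card_eq_sum_card_fiberwise
    intro π _
    have hmm := Finset.min'_mem (Bset π) (Bset_nonempty hn π)
    have hB := ((mem_Bset π _).1 hmm).1
    simp only [Finset.mem_Icc]
    exact Finset.mem_coe.2 (Finset.mem_Icc.2 hB)
  rw [hTA, hfib]
  apply Finset.sum_le_sum
  intro a ha
  rw [Finset.mem_Icc] at ha
  set F := A.filter (fun π => (Bset π).min' (Bset_nonempty hn π) = a) with hF
  have hFmem : ∀ π ∈ F, numComponents π = k ∧ a ∈ Bset π ∧ (∀ b ∈ Bset π, a ≤ b) := by
    intro π hπ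
    simp only [hF, hA, Finset.mem_filter, Finset.mem_univ, true_and] at hπ
    obtain ⟨hcomp, hmin⟩ := hπ
    refine ⟨hcomp, ?_, ?_⟩
    · rw [← hmin]; exact Finset.min'_mem _ _
    · intro b hb; rw [← hmin]; exact Finset.min'_le _ b hb
  have hpreF : ∀ π, π ∈ F → ∀ i : Fin n, (i : ℕ) < a → (π i : ℕ) < a :=
    fun π hπ => ((mem_Bset π a).1 (hFmem π hπ).2.1).2
  calc F.card = Fintype.card {π : Equiv.Perm (Fin n) // π ∈ F} := (Fintype.card_coe F).symm
    _ ≤ Fintype.card (Equiv.Perm (Fin a) ×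
          {τ : Equiv.Perm (Fin (n - a)) // numComponents τ = k - 1}) := by
        apply Fintype.card_le_of_injective
          (fun p => (headPerm a ha.2 p.1 (hpreF p.1 p.2),
            ⟨tailPerm a ha.2 p.1 (hpreF p.1 p.2),
              tail_card ha.1 ha.2 p.1 (hpreF p.1 p.2) (hFmem p.1 p.2).2.1 (hFmem p.1 p.2).2.2
                (by rw [← numComponents_eq]; exact (hFmem p.1 p.2).1)⟩))
        rintro ⟨π, hπ⟩ ⟨π', hπ'⟩ hpq
        simp only [Prod.mk.injEq, Subtype.mk.injEq] at hpq
        obtain ⟨hhead, htail⟩ := hpq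
        apply Subtype.ext
        apply Equiv.ext
        intro i
        show π i = π' i
        by_cases hia : (i : ℕ) < a
        · have hpf : (i : ℕ) < n := i.2
          have h1 := congrArg (fun e : Equiv.Perm (Fin a) => ((e ⟨(i : ℕ), hia⟩ : Fin a) : ℕ)) hhead
          have h1' : ((π ⟨(i : ℕ), hpf⟩ : Fin n) : ℕ) = ((π' ⟨(i : ℕ), hpf⟩ : Fin n) : ℕ) := h1
          have heq : (⟨(i : ℕ), hpf⟩ : Fin n) = i := Fin.eta i hpf
          rw [heq] at h1'
          exact Fin.ext h1'
        · push_neg at hia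
          have hin : (i : ℕ) - a < n - a := by have := i.2; omega
          have hpf : a + ((i : ℕ) - a) < n := by have := i.2; omega
          have h2 := congrArg
            (fun e : Equiv.Perm (Fin (n - a)) => ((e ⟨(i : ℕ) - a, hin⟩ : Fin (n - a)) : ℕ)) htail
          have h2' : ((π ⟨a + ((i : ℕ) - a), hpf⟩ : Fin n) : ℕ) - a
              = ((π' ⟨a + ((i : ℕ) - a), hpf⟩ : Fin n) : ℕ) - a := h2
          have heq : (⟨a + ((i : ℕ) - a), hpf⟩ : Fin n) = i :=
            Fin.ext (show a + ((i : ℕ) - a) = (i : ℕ) by omega)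
          rw [heq] at h2'
          have hl1 := low_of_pre π a (hpreF π hπ) i hia
          have hl2 := low_of_pre π' a (hpreF π' hπ') i hia
          exact Fin.ext (show ((π i : Fin n) : ℕ) = ((π' i : Fin n) : ℕ) by omega)
    _ = a.factorial * T (n - a) (k - 1) := by
        rw [Fintype.card_prod, Fintype.card_perm, Fintype.card_fin, Fintype.card_subtype]
        rfl

lemma numComponents_le {n : ℕ} (π : Equiv.Perm (Fin n)) : numComponents π ≤ n := by
  rw [numComponents_eq]
  calc (Bset π).card ≤ (Finset.Icc 1 n).card := Finset.card_le_card (Finset.filter_subset _ _)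
    _ = n := by rw [Nat.card_Icc]; omega

lemma T_eq_zero_of_lt {n k : ℕ} (h : n < k) : T n k = 0 := by
  rw [T, Finset.card_eq_zero, Finset.filter_eq_empty_iff]
  intro π _
  have := numComponents_le π
  omega

lemma T_zero_pos {n : ℕ} (hn : 1 ≤ n) : T n 0 = 0 := by
  rw [T, Finset.card_eq_zero, Finset.filter_eq_empty_iff]
  intro π _
  rw [numComponents_eq]
  have := Finset.card_pos.2 (Bset_nonempty hn π)
  omega

lemma T_zero_zero : T 0 0 = 1 := by
  rw [T]
  have : (Finset.univ.filter fun π : Equiv.Perm (Fin 0) => numComponents π = 0) = Finset.univ := by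
    apply Finset.filter_true_of_mem
    intro π _
    rw [numComponents_eq]
    simp [Bset]
  rw [this, Finset.card_univ]
  simp

def Mf : ℕ → ℕ → ℕ
  | 0, 0 => 1
  | 0, _ + 1 => 0
  | k + 1, l => ∑ m ∈ Finset.range (l + 1), (m + 1).factorial * Mf k (l - m)

lemma T_le_Mf : ∀ k n : ℕ, k ≤ n → T n k ≤ Mf k (n - k) := by
  intro k
  induction k with
  | zero =>
    intro n _
    match n with
    | 0 => rw [T_zero_zero]; simp [Mf]
    | n + 1 =>
      rw [T_zero_pos (by omega)]
      exact Nat.zero_le _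
  | succ k ih =>
    intro n hkn
    have h1 : T n (k + 1) ≤ ∑ a ∈ Finset.Icc 1 n, a.factorial * T (n - a) k := by
      have := T_rec (n := n) (k := k + 1) (by omega) (by omega)
      simpa using this
    have h2 : ∑ a ∈ Finset.Icc 1 n, a.factorial * T (n - a) k
        = ∑ a ∈ Finset.Icc 1 (n - k), a.factorial * T (n - a) k := by
      symm
      apply Finset.sum_subset
      · intro x hx
        simp only [Finset.mem_Icc] at *
        omega
      · intro x hx hnx
        simp only [Finset.mem_Icc] at hx hnx
        rw [T_eq_zero_of_lt (show n - x < k by omega), mul_zero]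
    have h3 : ∑ a ∈ Finset.Icc 1 (n - k), a.factorial * T (n - a) k
        ≤ ∑ a ∈ Finset.Icc 1 (n - k), a.factorial * Mf k (n - a - k) := by
      apply Finset.sum_le_sum
      intro a ha
      simp only [Finset.mem_Icc] at ha
      exact Nat.mul_le_mul_left _ (ih (n - a) (by omega))
    have h4 : ∑ a ∈ Finset.Icc 1 (n - k), a.factorial * Mf k (n - a - k)
        = Mf (k + 1) (n - (k + 1)) := by
      rw [show Mf (k + 1) (n - (k + 1))
        = ∑ m ∈ Finset.range ((n - (k + 1)) + 1), (m + 1).factorial * Mf k ((n - (k + 1)) - m)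
        from rfl]
      rw [show (n - (k + 1)) + 1 = n - k from by omega]
      apply Finset.sum_nbij' (fun a => a - 1) (fun m => m + 1)
      · intro a ha
        simp only [Finset.mem_Icc] at ha
        simp only [Finset.mem_range]
        omega
      · intro m hm
        simp only [Finset.mem_range] at hm
        simp only [Finset.mem_Icc]
        omega
      · intro a ha
        simp only [Finset.mem_Icc] at ha
        omega
      · intro m _
        omega
      · intro a ha
        simp only [Finset.mem_Icc] at ha
        rw [show a - 1 + 1 = a from by omega]
        congr 2
        omega
    omega

lemma Mf_le_pow {l : ℕ} {r : ℝ} (hr : 0 ≤ r) :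
    ∀ k, ∀ l' ≤ l, (Mf k l' : ℝ) * r ^ l' ≤
      (∑ m ∈ Finset.range (l + 1), ((m + 1).factorial : ℝ) * r ^ m) ^ k := by
  set H := ∑ m ∈ Finset.range (l + 1), ((m + 1).factorial : ℝ) * r ^ m with hHdef
  have hH0 : (0:ℝ) ≤ H := by
    apply Finset.sum_nonneg
    intro m _
    positivity
  intro k
  induction k with
  | zero =>
    intro l' _
    match l' with
    | 0 => simp [Mf]
    | j + 1 => simp [Mf]
  | succ k ih =>
    intro l' hl'
    have key : ∀ m ∈ Finset.range (l' + 1),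
        (((m + 1).factorial * Mf k (l' - m) : ℕ) : ℝ) * r ^ l'
          ≤ ((m + 1).factorial : ℝ) * r ^ m * H ^ k := by
      intro m hm
      have hm' : m ≤ l' := by
        simp only [Finset.mem_range] at hm; omega
      have hrl : r ^ l' = r ^ m * r ^ (l' - m) := by
        rw [← pow_add]; congr 1; omega
      rw [hrl]
      push_cast
      have h2 : (Mf k (l' - m) : ℝ) * r ^ (l' - m) ≤ H ^ k := ih (l' - m) (by omega)
      calc ((m + 1).factorial : ℝ) * Mf k (l' - m) * (r ^ m * r ^ (l' - m))
          = ((m + 1).factorial : ℝ) * r ^ m * ((Mf k (l' - m) : ℝ) * r ^ (l' - m)) := by ring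
        _ ≤ ((m + 1).factorial : ℝ) * r ^ m * H ^ k := by
            apply mul_le_mul_of_nonneg_left h2 (by positivity)
    calc (Mf (k + 1) l' : ℝ) * r ^ l'
        = ∑ m ∈ Finset.range (l' + 1),
            (((m + 1).factorial * Mf k (l' - m) : ℕ) : ℝ) * r ^ l' := by
          rw [show Mf (k + 1) l' = ∑ m ∈ Finset.range (l' + 1), (m + 1).factorial * Mf k (l' - m)
            from rfl]
          push_cast
          rw [Finset.sum_mul]
      _ ≤ ∑ m ∈ Finset.range (l' + 1), ((m + 1).factorial : ℝ) * r ^ m * H ^ k :=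
          Finset.sum_le_sum key
      _ ≤ ∑ m ∈ Finset.range (l + 1), ((m + 1).factorial : ℝ) * r ^ m * H ^ k := by
          apply Finset.sum_le_sum_of_subset_of_nonneg
          · exact Finset.range_subset_range.2 (by omega)
          · intro m _ _
            positivity
      _ = H * H ^ k := by rw [← Finset.sum_mul]
      _ = H ^ (k + 1) := by rw [pow_succ]; ring

lemma two_mul_pow_le (m : ℕ) (hm : 1 ≤ m) : 2 * m ^ m ≤ (m + 1) ^ m := by
  have hexp : (m + 1) ^ m = ∑ i ∈ Finset.range (m + 1), m ^ i * 1 ^ (m - i) * m.choose i :=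
    add_pow m 1 m
  have hsub : ({m - 1, m} : Finset ℕ) ⊆ Finset.range (m + 1) := by
    intro x hx
    simp only [Finset.mem_insert, Finset.mem_singleton] at hx
    rcases hx with h | h <;> simp [Finset.mem_range] <;> omega
  have hpair : ∑ i ∈ ({m - 1, m} : Finset ℕ), m ^ i * 1 ^ (m - i) * m.choose i
      ≤ ∑ i ∈ Finset.range (m + 1), m ^ i * 1 ^ (m - i) * m.choose i :=
    Finset.sum_le_sum_of_subset hsub
  have hne : m - 1 ≠ m := by omega
  rw [Finset.sum_pair hne] at hpair
  have h1 : m.choose (m - 1) = m := by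
    rw [Nat.choose_symm (by omega : 1 ≤ m), Nat.choose_one_right]
  have h2 : m ^ (m - 1) * 1 ^ (m - (m - 1)) * m.choose (m - 1) = m ^ m := by
    rw [h1, one_pow, mul_one]
    rw [← pow_succ, show m - 1 + 1 = m from by omega]
  have h3 : m ^ m * 1 ^ (m - m) * m.choose m = m ^ m := by
    simp
  rw [h2, h3] at hpair
  omega

lemma natkey (j : ℕ) : 500 * (j + 4) * (j + 2) ^ (j + 2) ≤ 297 * (j + 3) ^ (j + 3) := by
  by_cases hj : j ≤ 2
  · interval_cases j <;> norm_num
  · push_neg at hj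
    have h2 : 2 * (j + 2) ^ (j + 2) ≤ (j + 3) ^ (j + 2) := by
      have := two_mul_pow_le (j + 2) (by omega)
      rw [show j + 2 + 1 = j + 3 from by omega] at this
      exact this
    calc 500 * (j + 4) * (j + 2) ^ (j + 2) ≤ 297 * (j + 3) * (2 * (j + 2) ^ (j + 2)) := by
          have hc : 500 * (j + 4) ≤ 594 * (j + 3) := by omega
          calc 500 * (j + 4) * (j + 2) ^ (j + 2) ≤ 594 * (j + 3) * (j + 2) ^ (j + 2) :=
                Nat.mul_le_mul_right _ hc
            _ = 297 * (j + 3) * (2 * (j + 2) ^ (j + 2)) := by ring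
      _ ≤ 297 * (j + 3) * (j + 3) ^ (j + 2) := Nat.mul_le_mul_left _ h2
      _ = 297 * (j + 3) ^ (j + 3) := by ring

lemma natkey2 (j : ℕ) :
    (j + 4).factorial * 5 ^ (j + 3) * (100 * ((j + 2) * (3 * (j + 2)) ^ (j + 1)))
      ≤ 99 * (j + 3).factorial * 5 ^ (j + 2) * ((j + 3) * (3 * (j + 3)) ^ (j + 2)) := by
  have hf : (j + 4).factorial = (j + 4) * (j + 3).factorial := by
    rw [show j + 4 = (j + 3) + 1 from by omega, Nat.factorial_succ]
  have hk := natkey j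
  calc (j + 4).factorial * 5 ^ (j + 3) * (100 * ((j + 2) * (3 * (j + 2)) ^ (j + 1)))
      = (j + 3).factorial * 5 ^ (j + 2) * 3 ^ (j + 1) * (500 * (j + 4) * (j + 2) ^ (j + 2)) := by
        rw [hf, mul_pow]
        ring
    _ ≤ (j + 3).factorial * 5 ^ (j + 2) * 3 ^ (j + 1) * (297 * (j + 3) ^ (j + 3)) :=
        Nat.mul_le_mul_left _ hk
    _ = 99 * (j + 3).factorial * 5 ^ (j + 2) * ((j + 3) * (3 * (j + 3)) ^ (j + 2)) := by
        rw [mul_pow]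
        ring

noncomputable def psi (m : ℕ) : ℝ :=
  (((m + 1).factorial * 5 ^ m : ℕ) : ℝ) / ((m : ℝ) * ((3 * m : ℕ) : ℝ) ^ (m - 1))

lemma psi_nonneg (m : ℕ) : 0 ≤ psi m := by
  unfold psi
  apply div_nonneg <;> positivity

lemma psi_step (m : ℕ) (hm : 2 ≤ m) : psi (m + 1) ≤ (99 / 100) * psi m := by
  obtain ⟨j, rfl⟩ : ∃ j, m = j + 2 := ⟨m - 2, by omega⟩
  unfold psi
  have hd1 : (0:ℝ) < ((j + 3 : ℕ) : ℝ) * ((3 * (j + 3) : ℕ) : ℝ) ^ (j + 3 - 1) := by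
    positivity
  have hd2 : (0:ℝ) < ((j + 2 : ℕ) : ℝ) * ((3 * (j + 2) : ℕ) : ℝ) ^ (j + 2 - 1) := by
    positivity
  rw [show (99:ℝ)/100 * ((((j + 2 + 1).factorial * 5 ^ (j+2) : ℕ):ℝ) / (((j + 2:ℕ)) * ((3 * (j+2) : ℕ):ℝ) ^ (j + 2 - 1)))
      = ((99:ℝ) * (((j + 2 + 1).factorial * 5 ^ (j+2) : ℕ):ℝ)) / (100 * (((j + 2:ℕ)) * ((3 * (j+2) : ℕ):ℝ) ^ (j + 2 - 1))) from by ring]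
  rw [div_le_div_iff₀ (by exact_mod_cast hd1) (by positivity)]
  have hn := natkey2 j
  have hn' : (((j + 4).factorial * 5 ^ (j + 3) * (100 * ((j + 2) * (3 * (j + 2)) ^ (j + 1))) : ℕ) : ℝ)
      ≤ (((99 * (j + 3).factorial * 5 ^ (j + 2) * ((j + 3) * (3 * (j + 3)) ^ (j + 2))) : ℕ) : ℝ) := by
    exact_mod_cast hn
  push_cast at hn' ⊢
  rw [show j + 2 + 1 = j + 3 from by omega, show j + 3 - 1 = j + 2 from by omega,
    show j + 2 - 1 = j + 1 from by omega] at *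
  rw [show j + 3 + 1 = j + 4 from by omega]
  push_cast
  ring_nf
  ring_nf at hn'
  linarith [hn']

lemma psi_decay (m : ℕ) (hm2 : 2 ≤ m) : psi m ≤ 12.5 * (99 / 100 : ℝ) ^ (m - 2) := by
  induction m, hm2 using Nat.le_induction with
  | base =>
    unfold psi
    norm_num [Nat.factorial]
  | succ m hm ih =>
    calc psi (m + 1) ≤ (99 / 100) * psi m := psi_step m hm
      _ ≤ (99 / 100) * (12.5 * (99 / 100 : ℝ) ^ (m - 2)) := by
          apply mul_le_mul_of_nonneg_left (ih) (by norm_num)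
      _ = 12.5 * (99 / 100 : ℝ) ^ (m + 1 - 2) := by
          rw [show m + 1 - 2 = (m - 2) + 1 from by omega, pow_succ]
          ring

lemma natA (k l m : ℕ) (hm : 1 ≤ m) (hml : m ≤ l) :
    k * ((3 * m) ^ (m - 1) * m) ≤ (k + 3 * l) ^ m := by
  have h1 : (3 * m) ^ (m - 1) ≤ (3 * l) ^ (m - 1) :=
    Nat.pow_le_pow_left (by omega) _
  have hexp : (k + 3 * l) ^ m = ∑ i ∈ Finset.range (m + 1),
      k ^ i * (3 * l) ^ (m - i) * m.choose i := add_pow k (3 * l) m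
  have hmem : 1 ∈ Finset.range (m + 1) := by simp; omega
  have hsingle : k ^ 1 * (3 * l) ^ (m - 1) * m.choose 1
      ≤ ∑ i ∈ Finset.range (m + 1), k ^ i * (3 * l) ^ (m - i) * m.choose i :=
    Finset.single_le_sum (f := fun i => k ^ i * (3 * l) ^ (m - i) * m.choose i)
      (fun i _ => Nat.zero_le _) hmem
  rw [Nat.choose_one_right, pow_one] at hsingle
  calc k * ((3 * m) ^ (m - 1) * m) ≤ k * ((3 * l) ^ (m - 1) * m) := by
        apply Nat.mul_le_mul_left
        exact Nat.mul_le_mul_right _ h1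
    _ = k * (3 * l) ^ (m - 1) * m := by ring
    _ ≤ (k + 3 * l) ^ m := by rw [hexp]; exact hsingle

lemma sum_tail_le {k l : ℕ} (hk : 1 ≤ k) :
    (k : ℝ) * ∑ m ∈ Finset.Icc 1 l, ((m + 1).factorial : ℝ) * (5 / ((k : ℝ) + 3 * l)) ^ m
      ≤ 1260 := by
  have hx : (0:ℝ) < (k : ℝ) + 3 * l := by
    have : (1:ℝ) ≤ (k:ℝ) := by exact_mod_cast hk
    positivity
  rw [Finset.mul_sum]
  have hpoint : ∀ m ∈ Finset.Icc 1 l,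
      (k : ℝ) * (((m + 1).factorial : ℝ) * (5 / ((k : ℝ) + 3 * l)) ^ m) ≤ psi m := by
    intro m hm
    rw [Finset.mem_Icc] at hm
    obtain ⟨hm1, hml⟩ := hm
    have hnat := natA k l m hm1 hml
    have hc : (k : ℝ) * (((3 * m : ℕ):ℝ) ^ (m - 1) * (m:ℝ)) ≤ ((k : ℝ) + 3 * l) ^ m := by
      have h2 : ((k * ((3 * m) ^ (m - 1) * m) : ℕ) : ℝ) ≤ (((k + 3 * l) ^ m : ℕ) : ℝ) := by
        exact_mod_cast hnat
      push_cast at h2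
      convert h2 using 2 <;> push_cast <;> ring
    have hden : (0:ℝ) < (m : ℝ) * ((3 * m : ℕ) : ℝ) ^ (m - 1) := by
      have : (1:ℝ) ≤ (m:ℝ) := by exact_mod_cast hm1
      positivity
    have hxm : (0:ℝ) < ((k : ℝ) + 3 * l) ^ m := by positivity
    unfold psi
    rw [div_pow,
      show (k : ℝ) * (((m + 1).factorial : ℝ) * (5 ^ m / ((k : ℝ) + 3 * l) ^ m))
        = ((k:ℝ) * ((m + 1).factorial : ℝ) * 5 ^ m) / ((k : ℝ) + 3 * l) ^ m from by ring,
      div_le_div_iff₀ hxm hden]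
    have hfact : (0:ℝ) ≤ (((m + 1).factorial * 5 ^ m : ℕ) : ℝ) := by positivity
    calc (k:ℝ) * ((m + 1).factorial : ℝ) * 5 ^ m * ((m : ℝ) * ((3 * m : ℕ) : ℝ) ^ (m - 1))
        = (((m + 1).factorial * 5 ^ m : ℕ) : ℝ) * ((k : ℝ) * (((3 * m : ℕ):ℝ) ^ (m - 1) * (m:ℝ))) := by
          push_cast; ring
      _ ≤ (((m + 1).factorial * 5 ^ m : ℕ) : ℝ) * ((k : ℝ) + 3 * l) ^ m :=
          mul_le_mul_of_nonneg_left hc hfact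
  calc ∑ m ∈ Finset.Icc 1 l, (k : ℝ) * (((m + 1).factorial : ℝ) * (5 / ((k : ℝ) + 3 * l)) ^ m)
      ≤ ∑ m ∈ Finset.Icc 1 l, psi m := Finset.sum_le_sum hpoint
    _ ≤ 1260 := by
      rcases Nat.eq_zero_or_pos l with hl | hl
      · subst hl
        simp
      · have hins : Finset.Icc 1 l = insert 1 (Finset.Icc 2 l) := by
          ext x
          simp only [Finset.mem_Icc, Finset.mem_insert]
          omega
        rw [hins, Finset.sum_insert (by simp)]
        have hpsi1 : psi 1 = 10 := by
          unfold psi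
          norm_num [Nat.factorial]
        have htail : ∑ m ∈ Finset.Icc 2 l, psi m ≤ 1250 := by
          calc ∑ m ∈ Finset.Icc 2 l, psi m
              ≤ ∑ m ∈ Finset.Icc 2 l, 12.5 * (99 / 100 : ℝ) ^ (m - 2) := by
                apply Finset.sum_le_sum
                intro m hm
                rw [Finset.mem_Icc] at hm
                exact psi_decay m hm.1
            _ = 12.5 * ∑ m ∈ Finset.Icc 2 l, (99 / 100 : ℝ) ^ (m - 2) := by
                rw [Finset.mul_sum]
            _ ≤ 12.5 * 100 := by
                have hgeo : ∑ m ∈ Finset.Icc 2 l, (99 / 100 : ℝ) ^ (m - 2) ≤ 100 := by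
                  have hre : ∑ m ∈ Finset.Icc 2 l, (99 / 100 : ℝ) ^ (m - 2)
                      = ∑ i ∈ Finset.range (l + 1 - 2), (99 / 100 : ℝ) ^ i := by
                    apply Finset.sum_nbij' (fun m => m - 2) (fun i => i + 2)
                    · intro a ha
                      simp only [Finset.mem_Icc] at ha
                      simp only [Finset.mem_range]
                      omega
                    · intro a ha
                      simp only [Finset.mem_range] at ha
                      simp only [Finset.mem_Icc]
                      omega
                    · intro a ha
                      simp only [Finset.mem_Icc] at ha
                      omega
                    · intro a ha
                      omega
                    · intro a ha
                      rfl
                  rw [hre, show l + 1 - 2 = l - 1 from by omega]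
                  have hq : (99 / 100 : ℝ) ≠ 1 := by norm_num
                  rw [geom_sum_eq hq]
                  have hpow : (0:ℝ) ≤ (99 / 100 : ℝ) ^ (l - 1) := by positivity
                  have : ((99 / 100 : ℝ) ^ (l - 1) - 1) / (99 / 100 - 1)
                      = 100 * (1 - (99 / 100 : ℝ) ^ (l - 1)) := by
                    field_simp
                    ring
                  rw [this]
                  nlinarith
                nlinarith
            _ = 1250 := by norm_num
        rw [hpsi1]
        linarith

theorem stmt9 : ∃ c : ℝ, 0 < c ∧ ∀ n l : ℕ, l ≤ n - 1 →
    (T n (n - l) : ℝ) ≤ c * (l + 1) * (((n : ℝ) + 2 * l) / 5) ^ l := by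
  refine ⟨Real.exp 1260, Real.exp_pos _, ?_⟩
  have hexp1 : (1 : ℝ) ≤ Real.exp 1260 := by
    rw [show (1:ℝ) = Real.exp 0 from (Real.exp_zero).symm]
    exact Real.exp_le_exp.2 (by norm_num)
  intro n l hl
  rcases Nat.eq_zero_or_pos n with hn | hn
  · subst hn
    have hl0 : l = 0 := by omega
    subst hl0
    rw [show (0:ℕ) - 0 = 0 from rfl, T_zero_zero]
    simp only [Nat.cast_one, Nat.cast_zero, pow_zero]
    norm_num
  · have hln : l < n := by omega
    set k := n - l with hkdef
    have hk1 : 1 ≤ k := by omega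
    have hkn : k ≤ n := by omega
    have hnk : n - k = l := by omega
    have hTM : T n k ≤ Mf k l := by
      have := T_le_Mf k n hkn
      rwa [hnk] at this
    have hcast : ((k : ℕ) : ℝ) = (n : ℝ) - l := by
      rw [hkdef]
      push_cast [Nat.cast_sub (le_of_lt hln)]
      ring
    have hx : (0:ℝ) < (k : ℝ) + 3 * l := by
      have h1 : (1:ℝ) ≤ (k:ℝ) := by exact_mod_cast hk1
      have h2 : (0:ℝ) ≤ (l:ℝ) := by positivity
      linarith
    set r : ℝ := 5 / ((k : ℝ) + 3 * l) with hrdef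
    have hr : 0 < r := div_pos (by norm_num) hx
    have hrl : 0 < r ^ l := pow_pos hr l
    have hMf := Mf_le_pow (le_of_lt hr) k l le_rfl
    set S := ∑ m ∈ Finset.Icc 1 l, ((m + 1).factorial : ℝ) * r ^ m with hSdef
    have hS0 : 0 ≤ S := by
      apply Finset.sum_nonneg
      intro m _
      positivity
    have hH : ∑ m ∈ Finset.range (l + 1), ((m + 1).factorial : ℝ) * r ^ m = 1 + S := by
      have hins : Finset.range (l + 1) = insert 0 (Finset.Icc 1 l) := by
        ext x
        simp only [Finset.mem_range, Finset.mem_insert, Finset.mem_Icc]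
        omega
      rw [hins, Finset.sum_insert (by simp)]
      congr 1
      norm_num [Nat.factorial]
    rw [hH] at hMf
    have hkS : (k : ℝ) * S ≤ 1260 := sum_tail_le hk1
    have hpow : (1 + S) ^ k ≤ Real.exp 1260 := by
      calc (1 + S) ^ k ≤ (Real.exp S) ^ k := by
            apply pow_le_pow_left₀ (by linarith)
            have := Real.add_one_le_exp S
            linarith
        _ = Real.exp ((k : ℕ) * S) := by rw [← Real.exp_nat_mul]
        _ ≤ Real.exp 1260 := Real.exp_le_exp.2 hkS
    have hMf2 : (Mf k l : ℝ) ≤ Real.exp 1260 / r ^ l := by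
      rw [le_div_iff₀ hrl]
      calc (Mf k l : ℝ) * r ^ l ≤ (1 + S) ^ k := hMf
        _ ≤ Real.exp 1260 := hpow
    have hrinv : Real.exp 1260 / r ^ l = Real.exp 1260 * (((k:ℝ) + 3 * l) / 5) ^ l := by
      rw [hrdef]
      have h5 : ((k:ℝ) + 3 * l) ≠ 0 := ne_of_gt hx
      field_simp
      rw [← mul_pow, div_mul_div_comm, mul_comm (5:ℝ), div_self (mul_ne_zero h5 (by norm_num)), one_pow]
    have hfin : (((k:ℝ) + 3 * l) / 5) ^ l = (((n : ℝ) + 2 * l) / 5) ^ l := by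
      congr 1
      rw [hcast]
      ring
    have hTreal : (T n (n - l) : ℝ) ≤ Real.exp 1260 * (((n : ℝ) + 2 * l) / 5) ^ l := by
      calc (T n (n - l) : ℝ) = (T n k : ℝ) := by rw [hkdef]
        _ ≤ (Mf k l : ℝ) := by exact_mod_cast hTM
        _ ≤ Real.exp 1260 / r ^ l := hMf2
        _ = Real.exp 1260 * (((n : ℝ) + 2 * l) / 5) ^ l := by rw [hrinv, hfin]
    have hlast : Real.exp 1260 * (((n : ℝ) + 2 * l) / 5) ^ l
        ≤ Real.exp 1260 * (l + 1) * (((n : ℝ) + 2 * l) / 5) ^ l := by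
      have hp : (0:ℝ) ≤ (((n : ℝ) + 2 * l) / 5) ^ l := by positivity
      have h0 : (0:ℝ) ≤ (l:ℝ) := Nat.cast_nonneg l
      have h1 : (1:ℝ) ≤ (l:ℝ) + 1 := by linarith
      nlinarith [Real.exp_pos (1260:ℝ)]
    linarith
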